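/- arXiv:2207.11809 — 2 statements merged into one kernel-verified Lean document; each statement's English description precedes it below -/
import Mathlib

section
/- Let M = p₁^{n₁} ⋯ p_K^{n_K} with distinct primes p_ν and n_ν ≥ 1. For each ν = 1,…,K let x_ν, x'_ν ∈ ℤ/Mℤ satisfy gcd(x_ν, M) = gcd(x'_ν, M) = M / p_ν^{α_ν} with α_ν ≥ 1. Then there exists a unit r of ℤ/Mℤ such that r·x_ν = x'_ν for all ν simultaneously. -/
/-!
Two elements of `ZMod N` with the same gcd with `N` differ by a unit factor, so for each `ν`
there is a unit `r_ν` with `r_ν * x ν = x' ν`. The gcd condition also forces `x ν` and `x' ν`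
to vanish modulo `p μ ^ n μ` for every `μ ≠ ν`. By the Chinese remainder theorem there is a unit
`r` agreeing with `r_ν` modulo `p ν ^ n ν` for every `ν`, and it then maps each `x ν` to `x' ν`.
-/

open Finset Function

namespace ZMod

theorem gcd_val_unit_mul {N : ℕ} (u : (ZMod N)ˣ) (a : ZMod N) :
    ((u : ZMod N) * a).val.gcd N = a.val.gcd N := by
  rw [val_mul, ← Nat.gcd_rec, Nat.gcd_comm, (val_coe_unit_coprime u).gcd_mul_left_cancel]

theorem gcd_val_natCast_of_dvd {N d : ℕ} (hd : d ∣ N) : (d : ZMod N).val.gcd N = d := by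
  rw [val_natCast, ← Nat.gcd_rec, Nat.gcd_eq_right hd]

theorem exists_unit_mul_eq_of_gcd_val_eq {N : ℕ} {a b : ZMod N}
    (h : a.val.gcd N = b.val.gcd N) : ∃ u : (ZMod N)ˣ, (u : ZMod N) * a = b := by
  obtain ⟨d, hd, u, hu, rfl⟩ := eq_unit_mul_divisor a
  obtain ⟨e, he, v, hv, rfl⟩ := eq_unit_mul_divisor b
  have hde : d = e := by
    rwa [← hu.unit_spec, ← hv.unit_spec, gcd_val_unit_mul, gcd_val_unit_mul,
      gcd_val_natCast_of_dvd hd, gcd_val_natCast_of_dvd he] at h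
  refine ⟨hv.unit * hu.unit⁻¹, ?_⟩
  rw [hde, Units.val_mul, ← mul_assoc, mul_assoc _ _ u, hu.val_inv_mul, mul_one, hv.unit_spec]

theorem castHom_eq_zero_of_dvd_val {m N : ℕ} [NeZero N] (h : m ∣ N) {y : ZMod N}
    (hy : m ∣ y.val) : castHom h (ZMod m) y = 0 := by
  rw [← natCast_zmod_val y, map_natCast]
  exact (natCast_eq_zero_iff _ _).mpr hy

variable {ι : Type*} [Fintype ι] {q : ι → ℕ}

theorem eq_of_forall_castHom_eq (hq : Pairwise (Nat.Coprime on q)) {y y' : ZMod (∏ i, q i)}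
    (h : ∀ i, castHom (dvd_prod_of_mem q (mem_univ i)) (ZMod (q i)) y =
      castHom (dvd_prod_of_mem q (mem_univ i)) (ZMod (q i)) y') : y = y' :=
  (prodEquivPi q hq).injective <| funext fun i => by simpa only [prodEquivPi_apply] using h i

theorem exists_unit_castHom_eq (hq : Pairwise (Nat.Coprime on q)) (w : ∀ i, (ZMod (q i))ˣ) :
    ∃ r : (ZMod (∏ i, q i))ˣ,
      ∀ i, castHom (dvd_prod_of_mem q (mem_univ i)) (ZMod (q i)) r = (w i : ZMod (q i)) := by
  refine ⟨Units.map (prodEquivPi q hq).symm.toMonoidHom (MulEquiv.piUnits.symm w), fun i => ?_⟩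
  rw [← prodEquivPi_apply q hq, Units.coe_map]
  simp only [RingHom.toMonoidHom_eq_coe, RingEquiv.toRingHom_eq_coe, MonoidHom.coe_coe,
    RingHom.coe_coe, RingEquiv.apply_symm_apply]
  rfl

theorem exists_unit_forall_mul_eq [NeZero (∏ i, q i)] (hq : Pairwise (Nat.Coprime on q))
    {x x' : ι → ZMod (∏ i, q i)}
    (hgcd : ∀ i, (x i).val.gcd (∏ i, q i) = (x' i).val.gcd (∏ i, q i))
    (hx : ∀ i j, j ≠ i → q j ∣ (x i).val) (hx' : ∀ i j, j ≠ i → q j ∣ (x' i).val) :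
    ∃ r : (ZMod (∏ i, q i))ˣ, ∀ i, r * x i = x' i := by
  choose s hs using fun i => exists_unit_mul_eq_of_gcd_val_eq (hgcd i)
  obtain ⟨r, hr⟩ :=
    exists_unit_castHom_eq hq fun i => unitsMap (dvd_prod_of_mem q (mem_univ i)) (s i)
  refine ⟨r, fun i => eq_of_forall_castHom_eq hq fun j => ?_⟩
  rcases eq_or_ne j i with rfl | hji
  · rw [map_mul, hr, unitsMap_val, ← castHom_apply, ← map_mul, hs]
  · rw [map_mul, castHom_eq_zero_of_dvd_val _ (hx i j hji),
      castHom_eq_zero_of_dvd_val _ (hx' i j hji), mul_zero]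

end ZMod

theorem multitransitivity_of_dilations_general (M K : ℕ)
    (p : Fin K → ℕ) (hp : ∀ ν, (p ν).Prime)
    (hdist : Function.Injective p)
    (n : Fin K → ℕ)
    (hM : M = ∏ ν, p ν ^ n ν)
    (α : Fin K → ℕ) (hαn : ∀ ν, α ν ≤ n ν)
    (x x' : Fin K → ZMod M)
    (hx : ∀ ν, Nat.gcd (x ν).val M = M / p ν ^ α ν)
    (hx' : ∀ ν, Nat.gcd (x' ν).val M = M / p ν ^ α ν) :
    ∃ r : ZMod M, Nat.gcd r.val M = 1 ∧ ∀ ν, r * x ν = x' ν := by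
  subst hM
  have : NeZero (∏ ν, p ν ^ n ν) := ⟨prod_ne_zero_iff.mpr fun ν _ => pow_ne_zero _ (hp ν).ne_zero⟩
  have hcop {μ ν} (h : μ ≠ ν) : (p μ).Coprime (p ν) :=
    (Nat.coprime_primes (hp μ) (hp ν)).mpr (hdist.ne h)
  have hdvd {y : ZMod (∏ ν, p ν ^ n ν)} {ν}
      (hy : y.val.gcd (∏ ν, p ν ^ n ν) = (∏ ν, p ν ^ n ν) / p ν ^ α ν)
      (μ) (hμν : μ ≠ ν) : p μ ^ n μ ∣ y.val := by
    refine dvd_trans ?_ (hy ▸ Nat.gcd_dvd_left _ _)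
    exact Nat.dvd_div_of_mul_dvd (((hcop hμν).pow _ _).symm.mul_dvd_of_dvd_of_dvd
      ((pow_dvd_pow _ (hαn ν)).trans (dvd_prod_of_mem _ (mem_univ ν)))
      (dvd_prod_of_mem _ (mem_univ μ)))
  obtain ⟨r, hr⟩ := ZMod.exists_unit_forall_mul_eq (fun μ ν h => (hcop h).pow _ _)
    (fun ν => (hx ν).trans (hx' ν).symm) (fun ν => hdvd (hx ν)) (fun ν => hdvd (hx' ν))
  exact ⟨r, ZMod.val_coe_unit_coprime r, hr⟩

theorem multitransitivity_of_dilations (M K : ℕ)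
    (p : Fin K → ℕ) (hp : ∀ ν, (p ν).Prime)
    (hdist : Function.Injective p)
    (n : Fin K → ℕ) (hn : ∀ ν, 1 ≤ n ν)
    (hM : M = ∏ ν, p ν ^ n ν)
    (α : Fin K → ℕ) (hα : ∀ ν, 1 ≤ α ν) (hαn : ∀ ν, α ν ≤ n ν)
    (x x' : Fin K → ZMod M)
    (hx : ∀ ν, Nat.gcd (x ν).val M = M / p ν ^ α ν)
    (hx' : ∀ ν, Nat.gcd (x' ν).val M = M / p ν ^ α ν) :
    ∃ r : ZMod M, Nat.gcd r.val M = 1 ∧ ∀ ν, r * x ν = x' ν :=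
  multitransitivity_of_dilations_general M K p hp hdist n hM α hαn x x' hx hx'
end

section
/- (Enhanced divisor exclusion) Let A ⊕ B = ℤ/Mℤ with M = ∏_{ι=1}^K p_ι^{n_ι}. Let m = ∏ p_ι^{α_ι} and m' = ∏ p_ι^{α'_ι} be divisors of M with at least one of m, m' different from M, and suppose for each ι either α_ι ≠ α'_ι or α_ι = α'_ι = n_ι. Then for all x, y ∈ ℤ/Mℤ there is no quadruple (a, a', b, b') ∈ A × A × B × B with gcd(a - x, M) = gcd(b - y, M) = m and gcd(a' - x, M) = gcd(b' - y, M) = m'. -/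
/-- `A ⊕ B = ℤ_M`: every element has a unique representation `a + b`, `a ∈ A`, `b ∈ B`. -/
def IsTiling {M : ℕ} (A B : Finset (ZMod M)) : Prop :=
  ∀ z : ZMod M, ∃! ab : ZMod M × ZMod M, ab.1 ∈ A ∧ ab.2 ∈ B ∧ ab.1 + ab.2 = z

/-!
Tijdeman's dilation theorem: for a prime `p ∤ M`, Frobenius in `𝔽_p[ℤ/M]` gives
`1_A^p = ∑_{a ∈ A} [p a]`, so `1_A^p 1_B = 1_A^(p-1) 1_{ℤ/M} = |A|^(p-1) 1_{ℤ/M} = 1_{ℤ/M}`.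
Hence every `z` has `≡ 1 (mod p)` representations `z = p a + b`; as there are `|A| |B| = M` of them
in all, there is exactly one, i.e. `pA ⊕ B = ℤ/M`, and iterating, `tA ⊕ B = ℤ/M` for `t` coprime
to `M`. If `gcd(a - a', M) = gcd(b - b', M)`, then `b - b' = t (a - a')` for such a `t`, and
`t a + b' = t a' + b` forces `a = a'`, `b = b'` (divisor exclusion).

For the enhanced version, the `q`-adic valuation of `gcd(u - u', M)` is ultrametric in `u, u'`,
so the hypothesis on the exponents makes it `min(v_q m, v_q m')` for `u = a - x, u' = a' - x` as well
as for `u = b - y, u' = b' - y`. Divisor exclusion then gives `a = a'`, so `m = m'`, and the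
hypothesis forces every exponent to be maximal: `m = m' = M`.
-/

open Finset

namespace AddMonoidAlgebra

variable {R G : Type*} [CommSemiring R]

lemma coeff_sum_single_one {ι : Type*} [DecidableEq G] (s : Finset ι) (g : ι → G) (z : G) :
    (∑ i ∈ s, single (g i) (1 : R)).coeff z = #{i ∈ s | g i = z} := by
  simp [coeff_sum, coeff_single, Finsupp.single_apply]

variable [AddCommGroup G]

variable (R) in
noncomputable def indicator (S : Finset G) : R[G] := ∑ s ∈ S, single s 1

lemma indicator_pow_char (p : ℕ) [Fact p.Prime] [CharP R p] (S : Finset G) :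
    indicator R S ^ p = ∑ s ∈ S, single (p • s) 1 := by
  have : CharP R[G] p := charP_of_injective_algebraMap (R := R) (by intro x y h; simpa using h) p
  simp only [indicator, sum_pow_char, single_pow, one_pow]

variable [Fintype G]

lemma single_mul_indicator_univ (g : G) :
    single g (1 : R) * indicator R univ = indicator R univ := by
  simp only [indicator, mul_sum, single_mul_single, one_mul]
  exact Fintype.sum_equiv (Equiv.addLeft g) _ _ fun _ => rfl

lemma indicator_pow_mul_indicator_univ (S : Finset G) (k : ℕ) :
    indicator R S ^ k * indicator R univ = (#S ^ k) • indicator R univ := by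
  induction k with
  | zero => simp
  | succ k ih =>
    have hS : indicator R S * indicator R univ = #S • indicator R univ := by
      change (∑ s ∈ S, single s 1) * indicator R univ = _
      simp only [sum_mul, single_mul_indicator_univ, sum_const]
    rw [pow_succ', mul_assoc, ih, mul_smul_comm, hS, smul_smul, pow_succ]

end AddMonoidAlgebra

open AddMonoidAlgebra

lemma isTiling_image_of_card_filter_eq_one {M : ℕ} {A B : Finset (ZMod M)} (f : ZMod M → ZMod M)
    (h : ∀ z, #{ab ∈ A ×ˢ B | f ab.1 + ab.2 = z} = 1) : IsTiling (A.image f) B := by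
  intro z
  obtain ⟨⟨a, b⟩, hab⟩ := card_eq_one.mp (h z)
  have hmem : (a, b) ∈ {ab ∈ A ×ˢ B | f ab.1 + ab.2 = z} := hab ▸ mem_singleton_self _
  simp only [mem_filter, mem_product] at hmem
  refine ⟨(f a, b), ⟨mem_image_of_mem f hmem.1.1, hmem.1.2, hmem.2⟩, ?_⟩
  rintro ⟨_, b'⟩ ⟨hfa', hb', hz⟩
  obtain ⟨a', ha', rfl⟩ := mem_image.mp hfa'
  have : (a', b') ∈ {ab ∈ A ×ˢ B | f ab.1 + ab.2 = z} :=
    mem_filter.mpr ⟨mem_product.mpr ⟨ha', hb'⟩, hz⟩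
  rw [hab, mem_singleton, Prod.mk.injEq] at this
  rw [this.1, this.2]

namespace IsTiling

variable {M : ℕ} [NeZero M] {A B : Finset (ZMod M)}

lemma sum_add {β : Type*} [AddCommMonoid β] (hT : IsTiling A B) (f : ZMod M → β) :
    ∑ ab ∈ A ×ˢ B, f (ab.1 + ab.2) = ∑ z, f z := by
  refine sum_nbij (fun ab => ab.1 + ab.2) (fun _ _ => mem_univ _) ?_ ?_ fun _ _ => rfl
  · intro ab hab ab' hab' h
    obtain ⟨_, -, huniq⟩ := hT (ab.1 + ab.2)
    rw [coe_product, Set.mem_prod] at hab hab'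
    exact (huniq ab ⟨hab.1, hab.2, rfl⟩).trans (huniq ab' ⟨hab'.1, hab'.2, h.symm⟩).symm
  · intro z _
    obtain ⟨ab, ⟨ha, hb, hz⟩, -⟩ := hT z
    exact ⟨ab, by simp [ha, hb], hz⟩

lemma card_mul_card (hT : IsTiling A B) : #A * #B = M := by
  simpa using hT.sum_add fun _ => (1 : ℕ)

lemma indicator_mul_indicator {R : Type*} [CommSemiring R] (hT : IsTiling A B) :
    indicator R A * indicator R B = indicator R univ := by
  simp only [indicator, sum_mul_sum, single_mul_single, mul_one]
  rw [← sum_product' (f := fun a b => single (a + b) (1 : R))]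
  exact hT.sum_add fun z => single z (1 : R)

lemma indicator_pow_mul_indicator (hT : IsTiling A B) {p : ℕ} [Fact p.Prime] (hpA : ¬ p ∣ #A) :
    indicator (ZMod p) A ^ p * indicator (ZMod p) B = indicator (ZMod p) univ :=
  calc indicator (ZMod p) A ^ p * indicator (ZMod p) B
      = indicator (ZMod p) A ^ (p - 1) * indicator (ZMod p) univ := by
        rw [← hT.indicator_mul_indicator, ← mul_assoc, ← pow_succ,
          Nat.sub_add_cancel (Fact.out : p.Prime).pos]
    _ = indicator (ZMod p) univ := by
      rw [indicator_pow_mul_indicator_univ, ← Nat.cast_smul_eq_nsmul (ZMod p), Nat.cast_pow,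
        ZMod.pow_card_sub_one_eq_one (by rwa [Ne, ZMod.natCast_eq_zero_iff]), one_smul]

lemma cast_card_filter_mul_add_eq_one (hT : IsTiling A B) {p : ℕ} [Fact p.Prime]
    (hpA : ¬ p ∣ #A) (z : ZMod M) :
    (#{ab ∈ A ×ˢ B | (p : ZMod M) * ab.1 + ab.2 = z} : ZMod p) = 1 := by
  have key := hT.indicator_pow_mul_indicator hpA
  rw [indicator_pow_char, indicator, sum_mul_sum] at key
  simp only [single_mul_single, mul_one, nsmul_eq_mul] at key
  rw [← sum_product' (f := fun a b => single ((p : ZMod M) * a + b) (1 : ZMod p))] at key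
  have := congrArg (·.coeff z) key
  rw [coeff_sum_single_one] at this
  simpa [indicator, coeff_sum, Finsupp.single_apply] using this

theorem image_mul_of_prime (hT : IsTiling A B) {p : ℕ} (hp : p.Prime) (hpM : ¬ p ∣ M) :
    IsTiling (A.image ((p : ZMod M) * ·)) B := by
  have : Fact p.Prime := ⟨hp⟩
  set r : ZMod M → ℕ := fun z => #{ab ∈ A ×ˢ B | (p : ZMod M) * ab.1 + ab.2 = z}
  have hr_pos : ∀ z, 1 ≤ r z := fun z => Nat.one_le_iff_ne_zero.mpr fun h0 =>
    zero_ne_one (α := ZMod p) <| by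
      simpa [r, h0] using hT.cast_card_filter_mul_add_eq_one
        (fun h => hpM (hT.card_mul_card ▸ h.mul_right _)) z
  have hr_sum : ∑ z, r z = ∑ _z : ZMod M, 1 := by
    rw [← card_eq_sum_card_fiberwise fun _ _ => mem_univ _, card_product, hT.card_mul_card]
    simp
  refine isTiling_image_of_card_filter_eq_one _ fun z => ?_
  exact ((sum_eq_sum_iff_of_le fun z _ => hr_pos z).mp hr_sum.symm z (mem_univ z)).symm

theorem image_mul_of_coprime (hT : IsTiling A B) {t : ℕ} (ht : t.Coprime M) :
    IsTiling (A.image ((t : ZMod M) * ·)) B := by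
  induction t using Nat.recOnMul generalizing A with
  | zero =>
    obtain rfl : M = 1 := Nat.coprime_zero_left _ |>.mp ht
    rwa [Subsingleton.elim (fun a : ZMod 1 => ((0 : ℕ) : ZMod 1) * a) id, image_id]
  | one => simpa using hT
  | prime p hp => exact hT.image_mul_of_prime hp ((Nat.Prime.coprime_iff_not_dvd hp).mp ht)
  | mul a b iha ihb =>
    rw [Nat.coprime_mul_iff_left] at ht
    have h := iha (ihb hT ht.2) ht.1
    rw [image_image, Function.comp_def] at h
    simpa only [Nat.cast_mul, mul_assoc] using h

end IsTiling

namespace ZMod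

lemma gcd_val_natCast_of_dvd_s15 {M d : ℕ} (hd : d ∣ M) : Nat.gcd (d : ZMod M).val M = d := by
  rw [val_natCast, ← Nat.gcd_rec, Nat.gcd_eq_right hd]

variable {M : ℕ} [NeZero M]

lemma dvd_gcd_val_iff {d : ℕ} (hd : d ∣ M) (x : ZMod M) :
    d ∣ Nat.gcd x.val M ↔ castHom hd (ZMod d) x = 0 := by
  rw [Nat.dvd_gcd_iff, and_iff_left hd, castHom_apply, ← natCast_val, natCast_eq_zero_iff]

lemma gcd_val_mul_of_isUnit {u : ZMod M} (hu : IsUnit u) (x : ZMod M) :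
    Nat.gcd (u * x).val M = Nat.gcd x.val M := by
  have key : ∀ d (hd : d ∣ M), d ∣ Nat.gcd (u * x).val M ↔ d ∣ Nat.gcd x.val M := fun d hd => by
    rw [dvd_gcd_val_iff hd, dvd_gcd_val_iff hd, map_mul, (hu.map _).mul_right_eq_zero]
  exact Nat.dvd_antisymm ((key _ (Nat.gcd_dvd_right _ _)).mp dvd_rfl)
    ((key _ (Nat.gcd_dvd_right _ _)).mpr dvd_rfl)

lemma exists_isUnit_mul_eq_of_gcd_val_eq {x y : ZMod M}
    (h : Nat.gcd x.val M = Nat.gcd y.val M) : ∃ u : ZMod M, IsUnit u ∧ y = u * x := by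
  obtain ⟨d, hd, v, hv, rfl⟩ := eq_unit_mul_divisor x
  obtain ⟨d', hd', w, hw, rfl⟩ := eq_unit_mul_divisor y
  rw [gcd_val_mul_of_isUnit hv, gcd_val_mul_of_isUnit hw, gcd_val_natCast_of_dvd_s15 hd,
    gcd_val_natCast_of_dvd_s15 hd'] at h
  subst h
  refine ⟨w * ↑hv.unit⁻¹, hw.mul (Units.isUnit _), ?_⟩
  rw [mul_assoc, ← mul_assoc _ v, Units.inv_mul_of_eq hv.unit_spec, one_mul]

lemma le_factorization_gcd_val_iff {q k : ℕ} (hq : q.Prime) (hk : q ^ k ∣ M) (x : ZMod M) :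
    k ≤ (Nat.gcd x.val M).factorization q ↔ castHom hk (ZMod (q ^ k)) x = 0 :=
  (hq.pow_dvd_iff_le_factorization (Nat.gcd_ne_zero_right (NeZero.ne M))).symm.trans
    (dvd_gcd_val_iff hk x)

lemma factorization_gcd_val_le (x : ZMod M) (q : ℕ) :
    (Nat.gcd x.val M).factorization q ≤ M.factorization q :=
  (Nat.factorization_le_iff_dvd (Nat.gcd_ne_zero_right (NeZero.ne M)) (NeZero.ne M)).mpr
    (Nat.gcd_dvd_right _ _) q

lemma gcd_val_neg (x : ZMod M) : Nat.gcd (-x).val M = Nat.gcd x.val M := by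
  rw [neg_eq_neg_one_mul, gcd_val_mul_of_isUnit isUnit_one.neg]

lemma min_le_factorization_gcd_val_sub {q : ℕ} (hq : q.Prime) (x y : ZMod M) :
    min ((Nat.gcd x.val M).factorization q) ((Nat.gcd y.val M).factorization q) ≤
      (Nat.gcd (x - y).val M).factorization q := by
  have hk : q ^ min ((Nat.gcd x.val M).factorization q) ((Nat.gcd y.val M).factorization q) ∣ M :=
    (hq.pow_dvd_iff_le_factorization (NeZero.ne M)).mpr
      ((min_le_left _ _).trans (factorization_gcd_val_le x q))
  rw [le_factorization_gcd_val_iff hq hk, map_sub,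
    (le_factorization_gcd_val_iff hq hk x).mp (min_le_left _ _),
    (le_factorization_gcd_val_iff hq hk y).mp (min_le_right _ _), sub_zero]

lemma factorization_gcd_val_sub {q : ℕ} (hq : q.Prime) {x y : ZMod M}
    (h : (Nat.gcd x.val M).factorization q ≠ (Nat.gcd y.val M).factorization q ∨
      ((Nat.gcd x.val M).factorization q = M.factorization q ∧
        (Nat.gcd y.val M).factorization q = M.factorization q)) :
    (Nat.gcd (x - y).val M).factorization q =
      min ((Nat.gcd x.val M).factorization q) ((Nat.gcd y.val M).factorization q) := by
  -- Of the valuations of `x`, `y`, `x - y`, each is at least the minimum of the other two.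
  have h₁ := min_le_factorization_gcd_val_sub hq x y
  have h₂ := min_le_factorization_gcd_val_sub hq x (x - y)
  have h₃ := min_le_factorization_gcd_val_sub hq y (y - x)
  rw [sub_sub_cancel] at h₂
  rw [sub_sub_cancel, ← neg_sub, gcd_val_neg] at h₃
  have h₄ := factorization_gcd_val_le (x - y) q
  omega

end ZMod

namespace IsTiling

variable {M : ℕ} [NeZero M] {A B : Finset (ZMod M)}

theorem eq_of_gcd_val_sub_eq (hT : IsTiling A B) {a a' b b' : ZMod M} (ha : a ∈ A)
    (ha' : a' ∈ A) (hb : b ∈ B) (hb' : b' ∈ B)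
    (h : Nat.gcd (a - a').val M = Nat.gcd (b - b').val M) : a = a' ∧ b = b' := by
  obtain ⟨u, hu, hba⟩ := ZMod.exists_isUnit_mul_eq_of_gcd_val_eq h
  obtain ⟨t, ht, rfl⟩ : ∃ t : ℕ, t.Coprime M ∧ (t : ZMod M) = u :=
    ⟨u.val, (ZMod.isUnit_iff_coprime _ _).mp (by rwa [ZMod.natCast_zmod_val]),
      ZMod.natCast_zmod_val u⟩
  obtain ⟨_, -, huniq⟩ := hT.image_mul_of_coprime ht (t * a + b')
  have h₁ := huniq (t * a, b') ⟨mem_image_of_mem _ ha, hb', rfl⟩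
  have h₂ := huniq (t * a', b) ⟨mem_image_of_mem _ ha', hb, by linear_combination hba⟩
  rw [← h₂, Prod.mk.injEq] at h₁
  exact ⟨hu.mul_left_cancel h₁.1, h₁.2.symm⟩

theorem not_exists_gcd_val_sub_eq (hT : IsTiling A B) {m m' : ℕ} (hne : m ≠ M ∨ m' ≠ M)
    (hcond : ∀ q, q.Prime → m.factorization q ≠ m'.factorization q ∨
      (m.factorization q = M.factorization q ∧ m'.factorization q = M.factorization q))
    (x y : ZMod M) :
    ¬ ∃ a a' b b' : ZMod M, a ∈ A ∧ a' ∈ A ∧ b ∈ B ∧ b' ∈ B ∧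
      Nat.gcd (a - x).val M = m ∧ Nat.gcd (b - y).val M = m ∧
      Nat.gcd (a' - x).val M = m' ∧ Nat.gcd (b' - y).val M = m' := by
  rintro ⟨a, a', b, b', ha, ha', hb, hb', hax, hby, ha'x, hb'y⟩
  have hsub : ∀ {u u' z : ZMod M}, Nat.gcd (u - z).val M = m → Nat.gcd (u' - z).val M = m' →
      ∀ q, q.Prime → (Nat.gcd (u - u').val M).factorization q =
        min (m.factorization q) (m'.factorization q) := by
    intro u u' z hu hu' q hq
    rw [← sub_sub_sub_cancel_right u u' z,
      ZMod.factorization_gcd_val_sub (x := u - z) hq (by rw [hu, hu']; exact hcond q hq), hu, hu']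
  have hgcd : Nat.gcd (a - a').val M = Nat.gcd (b - b').val M := by
    refine Nat.eq_of_factorization_eq (Nat.gcd_ne_zero_right (NeZero.ne M))
      (Nat.gcd_ne_zero_right (NeZero.ne M)) fun q => ?_
    by_cases hq : q.Prime
    · rw [hsub hax ha'x q hq, hsub hby hb'y q hq]
    · simp [Nat.factorization_eq_zero_of_not_prime _ hq]
  obtain ⟨rfl, -⟩ := hT.eq_of_gcd_val_sub_eq ha ha' hb hb' hgcd
  obtain rfl : m = m' := hax.symm.trans ha'x
  have hmM : m = M := by
    refine Nat.eq_of_factorization_eq (hax ▸ Nat.gcd_ne_zero_right (NeZero.ne M)) (NeZero.ne M)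
      fun q => ?_
    by_cases hq : q.Prime
    · exact ((hcond q hq).resolve_left (not_not.mpr rfl)).1
    · simp [Nat.factorization_eq_zero_of_not_prime _ hq]
  exact hne.elim (· hmM) (· hmM)

end IsTiling

namespace Nat

variable {ι : Type*} [Fintype ι] {p : ι → ℕ}

lemma factorization_prod_pow (hp : ∀ i, (p i).Prime) (β : ι → ℕ) :
    (∏ i, p i ^ β i).factorization = ∑ i, Finsupp.single (p i) (β i) := by
  rw [Nat.factorization_prod fun i _ => pow_ne_zero _ (hp i).ne_zero]
  simp [(hp _).factorization_pow]

lemma factorization_prod_pow_apply_self (hp : ∀ i, (p i).Prime) (hinj : Function.Injective p)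
    (β : ι → ℕ) (j : ι) : (∏ i, p i ^ β i).factorization (p j) = β j := by
  classical
  simp [factorization_prod_pow hp, Finsupp.single_apply, hinj.eq_iff]

lemma factorization_prod_pow_eq_zero (hp : ∀ i, (p i).Prime) (β : ι → ℕ) {q : ℕ}
    (hq : q ∉ Set.range p) : (∏ i, p i ^ β i).factorization q = 0 := by
  classical
  simp only [factorization_prod_pow hp, Finsupp.finsetSum_apply, Finsupp.single_apply]
  exact Finset.sum_eq_zero fun i _ => if_neg fun h => hq ⟨i, h⟩

end Nat

theorem enhanced_divisor_exclusion_general (M K : ℕ)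
    (p : Fin K → ℕ) (hp : ∀ ι, (p ι).Prime)
    (hdist : Function.Injective p)
    (n : Fin K → ℕ)
    (hM : M = ∏ ι, p ι ^ n ι)
    (A B : Finset (ZMod M)) (hT : IsTiling A B)
    (α α' : Fin K → ℕ)
    (m m' : ℕ) (hm : m = ∏ ι, p ι ^ α ι) (hm' : m' = ∏ ι, p ι ^ α' ι)
    (hne : m ≠ M ∨ m' ≠ M)
    (hcond : ∀ ι, α ι ≠ α' ι ∨ (α ι = n ι ∧ α' ι = n ι)) :
    ∀ x y : ZMod M,
      ¬ ∃ a a' b b' : ZMod M, a ∈ A ∧ a' ∈ A ∧ b ∈ B ∧ b' ∈ B ∧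
        Nat.gcd (a - x).val M = m ∧ Nat.gcd (b - y).val M = m ∧
        Nat.gcd (a' - x).val M = m' ∧ Nat.gcd (b' - y).val M = m' := by
  have : NeZero M := ⟨hM ▸ Finset.prod_ne_zero_iff.mpr fun ι _ => pow_ne_zero _ (hp ι).ne_zero⟩
  refine hT.not_exists_gcd_val_sub_eq hne fun q _ => ?_
  rw [hm, hm', hM]
  by_cases hq : q ∈ Set.range p
  · obtain ⟨ι, rfl⟩ := hq
    simp only [Nat.factorization_prod_pow_apply_self hp hdist]
    exact hcond ι
  · simp only [Nat.factorization_prod_pow_eq_zero hp _ hq, and_self, or_true]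

theorem enhanced_divisor_exclusion (M K : ℕ)
    (p : Fin K → ℕ) (hp : ∀ ι, (p ι).Prime)
    (hdist : Function.Injective p)
    (n : Fin K → ℕ) (hn : ∀ ι, 1 ≤ n ι)
    (hM : M = ∏ ι, p ι ^ n ι)
    (A B : Finset (ZMod M)) (hT : IsTiling A B)
    (α α' : Fin K → ℕ) (hα : ∀ ι, α ι ≤ n ι) (hα' : ∀ ι, α' ι ≤ n ι)
    (m m' : ℕ) (hm : m = ∏ ι, p ι ^ α ι) (hm' : m' = ∏ ι, p ι ^ α' ι)
    (hne : m ≠ M ∨ m' ≠ M)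
    (hcond : ∀ ι, α ι ≠ α' ι ∨ (α ι = n ι ∧ α' ι = n ι)) :
    ∀ x y : ZMod M,
      ¬ ∃ a a' b b' : ZMod M, a ∈ A ∧ a' ∈ A ∧ b ∈ B ∧ b' ∈ B ∧
        Nat.gcd (a - x).val M = m ∧ Nat.gcd (b - y).val M = m ∧
        Nat.gcd (a' - x).val M = m' ∧ Nat.gcd (b' - y).val M = m' :=
  enhanced_divisor_exclusion_general M K p hp hdist n hM A B hT α α' m m' hm hm' hne hcond
end
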